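/- Let C ⊆ L0+ be convexly compact (convex, closed in the topology of convergence in probability, and bounded), and let (f_n)_{n∈ℕ} be a C-valued sequence converging in probability to some g ∈ C^max. Then every C-valued sequence (g_n)_{n∈ℕ} with f_n ≤ g_n a.s. for all n ∈ ℕ also converges in probability to g. -/

import Mathlib

/-!
Suppose `h n` does not approach `f n`. Along a subsequence, `dist0 (h n) (f n) ≥ ε` and
`f n → g` almost surely. Approximately maximize the strictly concave functional
`x ↦ E[1 - e^{-x}]` over the second components of the forward convex hulls of the pairs
`(f n, h n)`: uniform concavity and boundedness in probability make the near-maximizers Cauchy in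
probability, so they converge to some `a ∈ C` (closedness). The matching first components are
forward convex combinations of an almost surely convergent sequence, hence converge to `g`.
Thus `g ≤ a`, so `a = g` by maximality; but the gap `E[1 ∧ (h - f)] ≥ ε` survives convex
combinations by concavity of `t ↦ 1 ∧ t`, a contradiction.
-/


open MeasureTheory Filter Set

noncomputable section

variable {Ω : Type*} [MeasurableSpace Ω]

/-- The nonnegative orthant `L⁰₊` of the space `L⁰` of (a.e.-equivalence classes of)
random variables over `(Ω, ℱ, P)`. -/
def L0plus (P : Measure Ω) : Set (Ω →ₘ[P] ℝ) := {f | 0 ≤ f}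

/-- The metric `(f, g) ↦ E[1 ∧ |f - g|]` inducing the topology of convergence
in probability on `L⁰`. -/
def dist0 (P : Measure Ω) (f g : Ω →ₘ[P] ℝ) : ℝ :=
  ∫ ω, min 1 |f ω - g ω| ∂P

/-- Convergence in probability of a sequence in `L⁰`. -/
def Tendsto0 (P : Measure Ω) (f : ℕ → Ω →ₘ[P] ℝ) (g : Ω →ₘ[P] ℝ) : Prop :=
  Tendsto (fun n => dist0 P (f n) g) atTop (nhds 0)

/-- Closure of a set in `L⁰` with respect to the topology of convergence in probability. -/
def closure0 (P : Measure Ω) (C : Set (Ω →ₘ[P] ℝ)) : Set (Ω →ₘ[P] ℝ) :=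
  {f | ∀ ε : ℝ, 0 < ε → ∃ g ∈ C, dist0 P f g < ε}

/-- A set of `L⁰` is closed iff it contains its closure. -/
def IsClosed0 (P : Measure Ω) (C : Set (Ω →ₘ[P] ℝ)) : Prop :=
  closure0 P C ⊆ C

/-- Boundedness (in probability) of a set `C ⊆ L⁰₊` : `lim_{ℓ → ∞} sup_{f ∈ C} P[f > ℓ] = 0`. -/
def Bounded0 (P : Measure Ω) (C : Set (Ω →ₘ[P] ℝ)) : Prop :=
  Tendsto (fun ℓ : ℝ => ⨆ f ∈ C, P {ω | ℓ < f ω}) atTop (nhds 0)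

/-- The set `C^max` of maximal elements of `C ⊆ L⁰₊` : `f ∈ C` such that `f ≤ g` a.s.
and `g ∈ C` imply `f = g` a.s. -/
def maxSet (P : Measure Ω) (C : Set (Ω →ₘ[P] ℝ)) : Set (Ω →ₘ[P] ℝ) :=
  {f | f ∈ C ∧ ∀ g ∈ C, f ≤ g → f = g}

/-- `C` is max-closed if every maximal element of its closure already belongs to `C`. -/
def MaxClosed (P : Measure Ω) (C : Set (Ω →ₘ[P] ℝ)) : Prop :=
  maxSet P (closure0 P C) ⊆ C

/-- The pairing `⟨μ, f⟩ = ∫ f dμ ∈ [0, ∞]` between a nonnegative measure `μ` and `f ∈ L⁰₊`. -/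
def pairing {P : Measure Ω} (μ : Measure Ω) (f : Ω →ₘ[P] ℝ) : ENNReal :=
  ∫⁻ ω, ENNReal.ofReal (f ω) ∂μ

/-- The set `C^osp` of outer support points of `C ⊆ L⁰₊`: points `g ∈ C^max` for which there
is a σ-finite nonnegative measure `μ ≪ P` with `0 < sup_{f ∈ C} ⟨μ, f⟩ = ⟨μ, g⟩ < ∞`;
by convention `{0}^osp = {0}`. -/
def osp (P : Measure Ω) (C : Set (Ω →ₘ[P] ℝ)) : Set (Ω →ₘ[P] ℝ) :=
  {g | g ∈ maxSet P C ∧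
    (C = {0} ∨ ∃ μ : Measure Ω, μ ≪ P ∧ SigmaFinite μ ∧
      0 < pairing μ g ∧ pairing μ g < ⊤ ∧ (⨆ f ∈ C, pairing μ f) = pairing μ g)}

/-- The solid hull of `C ⊆ L⁰₊`. -/
def solidHull (P : Measure Ω) (C : Set (Ω →ₘ[P] ℝ)) : Set (Ω →ₘ[P] ℝ) :=
  {f | f ∈ L0plus P ∧ ∃ g ∈ C, f ≤ g}

/-- A set `S ⊆ L⁰₊` is solid if `g ∈ S` and `0 ≤ f ≤ g` imply `f ∈ S`. -/
def Solid (P : Measure Ω) (S : Set (Ω →ₘ[P] ℝ)) : Prop :=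
  ∀ g ∈ S, ∀ f : Ω →ₘ[P] ℝ, 0 ≤ f → f ≤ g → f ∈ S

/-- `(g n)` is a sequence of forward convex combinations of `(f n)`. -/
def ForwardConvexComb (P : Measure Ω) (f g : ℕ → Ω →ₘ[P] ℝ) : Prop :=
  ∀ n : ℕ, g n ∈ convexHull ℝ (f '' Set.Ici n)

end

open Topology Real

section L0

variable {Ω : Type*} [MeasurableSpace Ω] {P : Measure Ω}

section RealInequalities

lemma min_one_abs_add_le (x y : ℝ) : min 1 |x + y| ≤ min 1 |x| + min 1 |y| := by
  rcases le_total 1 |x| with hx | hx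
  · linarith [min_le_left 1 |x + y|, min_eq_left hx, le_min zero_le_one (abs_nonneg y)]
  rcases le_total 1 |y| with hy | hy
  · linarith [min_le_left 1 |x + y|, min_eq_left hy, le_min zero_le_one (abs_nonneg x)]
  rw [min_eq_right hx, min_eq_right hy]
  exact (min_le_right _ _).trans (abs_add_le x y)

lemma add_mul_min_one_le {a b u v : ℝ} (ha : 0 ≤ a) (hb : 0 ≤ b) (hab : a + b = 1) :
    a * min 1 u + b * min 1 v ≤ min 1 (a * u + b * v) :=
  le_min (by nlinarith [min_le_left 1 u, min_le_left 1 v])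
    (by nlinarith [min_le_right 1 u, min_le_right 1 v])

lemma one_sub_exp_neg_midpoint (a b : ℝ) :
    1 - exp (-((a + b) / 2)) =
      (1 - exp (-a)) / 2 + (1 - exp (-b)) / 2 + (exp (-(a / 2)) - exp (-(b / 2))) ^ 2 / 2 := by
  have hsq : ∀ t : ℝ, exp (-t) = exp (-(t / 2)) * exp (-(t / 2)) := fun t => by
    rw [← exp_add]; ring_nf
  have hmid : exp (-((a + b) / 2)) = exp (-(a / 2)) * exp (-(b / 2)) := by
    rw [← exp_add]; ring_nf
  rw [hsq a, hsq b, hmid]; ring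

lemma mul_one_sub_exp_le_abs_exp_sub {a b M β : ℝ} (ha : a ≤ M) (hb : b ≤ M) (hβ0 : 0 ≤ β)
    (hβ : β ≤ |a - b|) :
    exp (-(M / 2)) * (1 - exp (-(β / 2))) ≤ |exp (-(a / 2)) - exp (-(b / 2))| := by
  wlog hab : a ≤ b generalizing a b
  · rw [abs_sub_comm]
    exact this hb ha (by rwa [abs_sub_comm]) (le_of_not_ge hab)
  rw [abs_of_nonpos (sub_nonpos.2 hab)] at hβ
  have hsplit : exp (-(a / 2)) - exp (-(b / 2)) = exp (-(a / 2)) * (1 - exp (-((b - a) / 2))) := by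
    rw [mul_one_sub, ← exp_add]; ring_nf
  have hgap : 0 ≤ 1 - exp (-(β / 2)) := sub_nonneg.2 (exp_le_one_iff.2 (by linarith))
  rw [hsplit, abs_of_nonneg (mul_nonneg (exp_pos _).le
    (sub_nonneg.2 (exp_le_one_iff.2 (by linarith))))]
  exact mul_le_mul (exp_le_exp.2 (by linarith)) (by gcongr; linarith) hgap (exp_pos _).le

/-- Where neither `a` nor `b` exceeds `M`, the map `t ↦ e^{-t/2}` separates points at distance
more than `β` by at least `η`. -/
lemma min_one_abs_sub_le {a b M β η : ℝ} (hβ : 0 ≤ β) (hη : 0 < η)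
    (hηle : η ≤ exp (-(M / 2)) * (1 - exp (-(β / 2)))) :
    min 1 |a - b| ≤ β + (if M < a then 1 else 0) + (if M < b then 1 else 0) +
      (exp (-(a / 2)) - exp (-(b / 2))) ^ 2 / η ^ 2 := by
  have hsq : 0 ≤ (exp (-(a / 2)) - exp (-(b / 2))) ^ 2 / η ^ 2 := by positivity
  have hle1 : min 1 |a - b| ≤ 1 := min_le_left _ _
  split_ifs with hMa hMb hMb
  · linarith
  · linarith
  · linarith
  push Not at hMa hMb
  rcases le_or_gt |a - b| β with hab | hab
  · linarith [min_le_right 1 |a - b|]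
  have hgap := mul_one_sub_exp_le_abs_exp_sub hMa hMb hβ hab.le
  have : 1 ≤ (exp (-(a / 2)) - exp (-(b / 2))) ^ 2 / η ^ 2 := by
    rw [one_le_div (by positivity), ← sq_abs (exp _ - _)]
    exact pow_le_pow_left₀ hη.le (hηle.trans hgap) 2
  linarith

lemma summable_abs_of_summable_min_one_abs {u : ℕ → ℝ} (h : Summable fun j => min 1 |u j|) :
    Summable fun j => |u j| := by
  refine h.congr_cofinite ?_
  filter_upwards [h.tendsto_cofinite_zero.eventually_lt_const one_pos] with j hj
  exact min_eq_right (le_of_not_ge fun h1 => by rw [min_eq_left h1] at hj; exact hj.false)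

end RealInequalities

section ConvergenceInProbability

lemma dist0_nonneg (x y : Ω →ₘ[P] ℝ) : 0 ≤ dist0 P x y :=
  integral_nonneg fun _ => le_min zero_le_one (abs_nonneg _)

lemma dist0_comm (x y : Ω →ₘ[P] ℝ) : dist0 P x y = dist0 P y x := by
  simp only [dist0, abs_sub_comm]

lemma mem_of_tendsto0 {C : Set (Ω →ₘ[P] ℝ)} (hC : IsClosed0 P C) {x : ℕ → Ω →ₘ[P] ℝ}
    {a : Ω →ₘ[P] ℝ} (hxC : ∀ n, x n ∈ C) (hx : Tendsto0 P x a) : a ∈ C := by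
  refine hC fun ε hε => ?_
  obtain ⟨n, hn⟩ := (hx.eventually_lt_const hε).exists
  exact ⟨x n, hxC n, dist0_comm a (x n) ▸ hn⟩

variable [IsProbabilityMeasure P]

lemma integrable_min_one_abs_sub (x y : Ω →ₘ[P] ℝ) :
    Integrable (fun ω => min 1 |x ω - y ω|) P :=
  Integrable.of_bound (by fun_prop) 1 (Eventually.of_forall fun ω => by
    rw [Real.norm_eq_abs, abs_of_nonneg (le_min zero_le_one (abs_nonneg _))]
    exact min_le_left _ _)

lemma dist0_triangle (x y z : Ω →ₘ[P] ℝ) : dist0 P x z ≤ dist0 P x y + dist0 P y z := by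
  rw [dist0, dist0, dist0, ← integral_add (integrable_min_one_abs_sub x y)
    (integrable_min_one_abs_sub y z)]
  refine integral_mono (integrable_min_one_abs_sub x z)
    ((integrable_min_one_abs_sub x y).add (integrable_min_one_abs_sub y z)) fun ω => ?_
  simpa only [sub_add_sub_cancel] using min_one_abs_add_le (x ω - y ω) (y ω - z ω)

lemma tendsto0_of_ae_tendsto {x : ℕ → Ω →ₘ[P] ℝ} {y : Ω →ₘ[P] ℝ}
    (hxy : ∀ᵐ ω ∂P, Tendsto (fun n => x n ω) atTop (𝓝 (y ω))) : Tendsto0 P x y := by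
  have hlim := tendsto_integral_of_dominated_convergence (μ := P) (fun _ => (1 : ℝ))
    (fun n => (integrable_min_one_abs_sub (x n) y).aestronglyMeasurable) (integrable_const 1)
    (fun n => Eventually.of_forall fun ω => by
      rw [Real.norm_eq_abs, abs_of_nonneg (le_min zero_le_one (abs_nonneg _))]
      exact min_le_left _ _)
    (hxy.mono fun ω hω => by
      simpa using tendsto_const_nhds.min (hω.sub_const (y ω)).abs)
  simpa [Tendsto0, dist0] using hlim

lemma ae_summable_min_one_abs_sub {v w : ℕ → Ω →ₘ[P] ℝ}
    (hvw : ∀ n, dist0 P (v n) (w n) ≤ (1 / 2 : ℝ) ^ n) :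
    ∀ᵐ ω ∂P, Summable fun n => min 1 |v n ω - w n ω| := by
  have hmeas : ∀ n, Measurable fun ω => ENNReal.ofReal (min 1 |v n ω - w n ω|) := by
    intro n; fun_prop
  have hfin : ∫⁻ ω, ∑' n, ENNReal.ofReal (min 1 |v n ω - w n ω|) ∂P ≠ ⊤ := by
    rw [lintegral_tsum fun n => (hmeas n).aemeasurable]
    refine ne_top_of_le_ne_top ENNReal.ofReal_ne_top (calc
      _ ≤ ∑' n, ENNReal.ofReal ((1 / 2 : ℝ) ^ n) := ENNReal.tsum_le_tsum fun n => ?_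
      _ = ENNReal.ofReal (∑' n, (1 / 2 : ℝ) ^ n) := (ENNReal.ofReal_tsum_of_nonneg
        (fun n => by positivity) (summable_geometric_of_lt_one (by norm_num) (by norm_num))).symm)
    rw [← ofReal_integral_eq_lintegral_ofReal (integrable_min_one_abs_sub _ _)
      (Eventually.of_forall fun _ => le_min zero_le_one (abs_nonneg _))]
    exact ENNReal.ofReal_le_ofReal (hvw n)
  filter_upwards [ae_lt_top (Measurable.tsum hmeas) hfin] with ω hω
  refine (ENNReal.summable_toReal hω.ne).congr fun n => ?_
  rw [ENNReal.toReal_ofReal (le_min zero_le_one (abs_nonneg _))]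

lemma exists_subseq_ae_tendsto {x : ℕ → Ω →ₘ[P] ℝ} {y : Ω →ₘ[P] ℝ} (hxy : Tendsto0 P x y) :
    ∃ φ : ℕ → ℕ, StrictMono φ ∧ ∀ᵐ ω ∂P, Tendsto (fun j => x (φ j) ω) atTop (𝓝 (y ω)) := by
  obtain ⟨φ, hφ, hfast⟩ := extraction_forall_of_eventually fun j =>
    hxy.eventually_le_const (pow_pos (by norm_num : (0 : ℝ) < 1 / 2) j)
  refine ⟨φ, hφ, ?_⟩
  filter_upwards [ae_summable_min_one_abs_sub (w := fun _ => y) hfast] with ω hω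
  exact tendsto_iff_norm_sub_tendsto_zero.2
    (summable_abs_of_summable_min_one_abs hω).tendsto_atTop_zero

lemma le_of_tendsto0 {x y : ℕ → Ω →ₘ[P] ℝ} {a b : Ω →ₘ[P] ℝ} (hx : Tendsto0 P x a)
    (hy : Tendsto0 P y b) (hxy : ∀ n, x n ≤ y n) : a ≤ b := by
  obtain ⟨φ, hφ, hxa⟩ := exists_subseq_ae_tendsto hx
  obtain ⟨ψ, hψ, hyb⟩ := exists_subseq_ae_tendsto (hy.comp hφ.tendsto_atTop)
  rw [← AEEqFun.coeFn_le]
  filter_upwards [hxa, hyb, ae_all_iff.2 fun n => AEEqFun.coeFn_le.2 (hxy n)]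
    with ω hxω hyω hle
  exact le_of_tendsto_of_tendsto' (hxω.comp hψ.tendsto_atTop) hyω fun j => hle _

/-- Completeness of `L⁰`: a rapidly Cauchy subsequence converges almost surely, and its limit is
then the limit of the whole sequence. -/
lemma exists_tendsto0_of_cauchy {x : ℕ → Ω →ₘ[P] ℝ}
    (hx : ∀ γ > 0, ∃ N, ∀ n m, N ≤ n → n ≤ m → dist0 P (x n) (x m) ≤ γ) :
    ∃ a, Tendsto0 P x a := by
  obtain ⟨φ, hφ, hfast⟩ := extraction_forall_of_eventually fun j => by
    obtain ⟨N, hN⟩ := hx _ (pow_pos (by norm_num : (0 : ℝ) < 1 / 2) j)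
    exact eventually_atTop.2 ⟨N, fun n hn m hnm => hN n m hn hnm⟩
  have hcauchy : ∀ᵐ ω ∂P, CauchySeq fun j => x (φ j) ω := by
    filter_upwards [ae_summable_min_one_abs_sub fun j =>
      hfast j (φ (j + 1)) (hφ.monotone j.le_succ)] with ω hω
    refine cauchySeq_of_summable_dist ?_
    simpa only [Real.dist_eq] using summable_abs_of_summable_min_one_abs hω
  set w : Ω → ℝ := fun ω => limUnder atTop fun j => x (φ j) ω
  have hw : ∀ᵐ ω ∂P, Tendsto (fun j => x (φ j) ω) atTop (𝓝 (w ω)) :=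
    hcauchy.mono fun ω hω => hω.tendsto_limUnder
  have hwm : AEStronglyMeasurable w P :=
    aestronglyMeasurable_of_tendsto_ae atTop (fun j => (x (φ j)).aestronglyMeasurable) hw
  have hsub : Tendsto0 P (fun j => x (φ j)) (AEEqFun.mk w hwm) :=
    tendsto0_of_ae_tendsto <| by
      filter_upwards [hw, AEEqFun.coeFn_mk w hwm] with ω hω hmk
      rwa [hmk]
  refine ⟨AEEqFun.mk w hwm, Metric.tendsto_atTop.2 fun γ hγ => ?_⟩
  obtain ⟨N, hN⟩ := hx (γ / 2) (by positivity)
  obtain ⟨J, hJ⟩ := eventually_atTop.1 (hsub.eventually_lt_const (half_pos hγ))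
  refine ⟨N, fun n hn => ?_⟩
  have hj : n ≤ φ (max J n) := (le_max_right J n).trans (hφ.id_le _)
  rw [Real.dist_eq, sub_zero, abs_of_nonneg (dist0_nonneg _ _)]
  linarith [dist0_triangle (x n) (x (φ (max J n))) (AEEqFun.mk w hwm),
    hN n _ hn hj, hJ _ (le_max_left J n)]

end ConvergenceInProbability

section ConvexCombinations

lemma coeFn_smul_add_smul (a b : ℝ) (x y : Ω →ₘ[P] ℝ) :
    ⇑(a • x + b • y) =ᵐ[P] fun ω => a * x ω + b * y ω := by
  filter_upwards [AEEqFun.coeFn_add (a • x) (b • y), AEEqFun.coeFn_smul a x,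
    AEEqFun.coeFn_smul b y] with ω hadd hax hby
  simp only [hadd, Pi.add_apply, hax, hby, Pi.smul_apply, smul_eq_mul]

lemma convex_setOf_ae_mem {S : Ω → Set ℝ} (hS : ∀ ω, Convex ℝ (S ω)) :
    Convex ℝ {x : Ω →ₘ[P] ℝ | ∀ᵐ ω ∂P, x ω ∈ S ω} := by
  intro x hx y hy a b ha hb hab
  filter_upwards [hx, hy, coeFn_smul_add_smul a b x y] with ω hxω hyω hω
  rw [hω]
  exact hS ω hxω hyω ha hb hab

/-- Pointwise, every forward convex combination of `(F k)` at `ω` lies in each closed ball around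
`g ω` that contains the tail `{F k ω | k ≥ n}`. -/
lemma ae_tendsto_of_forwardConvexComb {F x : ℕ → Ω →ₘ[P] ℝ} {g : Ω →ₘ[P] ℝ}
    (hF : ∀ᵐ ω ∂P, Tendsto (fun k => F k ω) atTop (𝓝 (g ω))) (hx : ForwardConvexComb P F x) :
    ∀ᵐ ω ∂P, Tendsto (fun n => x n ω) atTop (𝓝 (g ω)) := by
  set S : ℕ → Ω → Set ℝ := fun n ω =>
    ⋂ δ ∈ upperBounds ((fun k => |F k ω - g ω|) '' Ici n), Metric.closedBall (g ω) δ
  have hxS : ∀ n, x n ∈ {y : Ω →ₘ[P] ℝ | ∀ᵐ ω ∂P, y ω ∈ S n ω} := fun n =>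
    convexHull_min
      (by
        rintro _ ⟨k, hk, rfl⟩
        show ∀ᵐ ω ∂P, F k ω ∈ S n ω
        refine Eventually.of_forall fun ω => ?_
        exact mem_iInter₂.2 fun δ hδ => Metric.mem_closedBall.2 (hδ ⟨k, hk, rfl⟩))
      (convex_setOf_ae_mem fun ω => convex_iInter₂ fun δ _ => convex_closedBall _ _) (hx n)
  filter_upwards [hF, ae_all_iff.2 hxS] with ω hFω hxω
  refine Metric.tendsto_atTop.2 fun δ hδ => ?_
  obtain ⟨N, hN⟩ := Metric.tendsto_atTop.1 hFω (δ / 2) (half_pos hδ)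
  refine ⟨N, fun n hn => ?_⟩
  have hbound : δ / 2 ∈ upperBounds ((fun k => |F k ω - g ω|) '' Ici n) := by
    rintro _ ⟨k, hk, rfl⟩
    exact (hN k (hn.trans hk)).le
  have := Metric.mem_closedBall.1 (mem_iInter₂.1 (hxω n) _ hbound)
  linarith

lemma convex_setOf_ae_le_and_le_dist0 [IsProbabilityMeasure P] (ε : ℝ) :
    Convex ℝ {q : (Ω →ₘ[P] ℝ) × (Ω →ₘ[P] ℝ) | (∀ᵐ ω ∂P, q.1 ω ≤ q.2 ω) ∧ ε ≤ dist0 P q.2 q.1} := by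
  rintro q ⟨hq, hqε⟩ r ⟨hr, hrε⟩ a b ha hb hab
  have h1 : ⇑(a • q + b • r).1 =ᵐ[P] fun ω => a * q.1 ω + b * r.1 ω :=
    coeFn_smul_add_smul a b q.1 r.1
  have h2 : ⇑(a • q + b • r).2 =ᵐ[P] fun ω => a * q.2 ω + b * r.2 ω :=
    coeFn_smul_add_smul a b q.2 r.2
  refine ⟨by filter_upwards [hq, hr, h1, h2] with ω hqω hrω h1ω h2ω; rw [h1ω, h2ω]; gcongr, ?_⟩
  have hmix : ∀ᵐ ω ∂P, a * min 1 |q.2 ω - q.1 ω| + b * min 1 |r.2 ω - r.1 ω| ≤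
      min 1 |(a • q + b • r).2 ω - (a • q + b • r).1 ω| := by
    filter_upwards [hq, hr, h1, h2] with ω hqω hrω h1ω h2ω
    rw [h1ω, h2ω, abs_of_nonneg (sub_nonneg.2 hqω), abs_of_nonneg (sub_nonneg.2 hrω),
      abs_of_nonneg (by nlinarith)]
    convert add_mul_min_one_le ha hb hab using 3
    ring
  calc ε = a * ε + b * ε := by rw [← add_mul, hab, one_mul]
    _ ≤ a * dist0 P q.2 q.1 + b * dist0 P r.2 r.1 := by gcongr
    _ = ∫ ω, a * min 1 |q.2 ω - q.1 ω| + b * min 1 |r.2 ω - r.1 ω| ∂P := by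
      rw [integral_add ((integrable_min_one_abs_sub _ _).const_mul a)
        ((integrable_min_one_abs_sub _ _).const_mul b), integral_const_mul, integral_const_mul]
      rfl
    _ ≤ dist0 P (a • q + b • r).2 (a • q + b • r).1 :=
      integral_mono_ae (((integrable_min_one_abs_sub _ _).const_mul a).add
        ((integrable_min_one_abs_sub _ _).const_mul b)) (integrable_min_one_abs_sub _ _) hmix

end ConvexCombinations

section ExpUtility

variable (P) in
noncomputable def expUtility (x : Ω →ₘ[P] ℝ) : ℝ := ∫ ω, (1 - exp (-x ω)) ∂P

variable (P) in
noncomputable def expSqDist (x y : Ω →ₘ[P] ℝ) : ℝ :=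
  ∫ ω, (exp (-(x ω / 2)) - exp (-(y ω / 2))) ^ 2 ∂P

lemma ae_nonneg_of_mem_L0plus {x : Ω →ₘ[P] ℝ} (hx : x ∈ L0plus P) : ∀ᵐ ω ∂P, 0 ≤ x ω := by
  filter_upwards [AEEqFun.coeFn_le.2 hx, AEEqFun.coeFn_zero (β := ℝ) (μ := P)] with ω hω h0
  rwa [h0] at hω

lemma expUtility_nonneg {x : Ω →ₘ[P] ℝ} (hx : ∀ᵐ ω ∂P, 0 ≤ x ω) :
    0 ≤ expUtility P x :=
  integral_nonneg_of_ae <| hx.mono fun _ hω =>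
    sub_nonneg.2 (exp_le_one_iff.2 (neg_nonpos.2 hω))

variable [IsProbabilityMeasure P] {x y : Ω →ₘ[P] ℝ}

lemma integrable_one_sub_exp_neg (hx : ∀ᵐ ω ∂P, 0 ≤ x ω) :
    Integrable (fun ω => 1 - exp (-x ω)) P :=
  Integrable.of_bound (by fun_prop) 1 <| hx.mono fun ω hω => by
    rw [Real.norm_eq_abs, abs_le]
    constructor <;> linarith [exp_pos (-x ω), exp_le_one_iff.2 (neg_nonpos.2 hω)]

lemma expUtility_le_one (hx : ∀ᵐ ω ∂P, 0 ≤ x ω) : expUtility P x ≤ 1 := by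
  calc expUtility P x ≤ ∫ _, (1 : ℝ) ∂P :=
        integral_mono (integrable_one_sub_exp_neg hx) (integrable_const 1)
          fun ω => sub_le_self 1 (exp_pos _).le
    _ = 1 := by simp

lemma integrable_exp_neg_half_sub_sq (hx : ∀ᵐ ω ∂P, 0 ≤ x ω) (hy : ∀ᵐ ω ∂P, 0 ≤ y ω) :
    Integrable (fun ω => (exp (-(x ω / 2)) - exp (-(y ω / 2))) ^ 2) P :=
  Integrable.of_bound (by fun_prop) 1 <| by
    filter_upwards [hx, hy] with ω hxω hyω
    have hx1 : exp (-(x ω / 2)) ≤ 1 := exp_le_one_iff.2 (by linarith)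
    have hy1 : exp (-(y ω / 2)) ≤ 1 := exp_le_one_iff.2 (by linarith)
    rw [Real.norm_eq_abs, abs_of_nonneg (sq_nonneg _), sq_le_one_iff_abs_le_one, abs_le]
    constructor <;> linarith [exp_pos (-(x ω / 2)), exp_pos (-(y ω / 2))]

lemma expUtility_midpoint (hx : ∀ᵐ ω ∂P, 0 ≤ x ω) (hy : ∀ᵐ ω ∂P, 0 ≤ y ω) :
    expUtility P ((1 / 2 : ℝ) • x + (1 / 2 : ℝ) • y) =
      expUtility P x / 2 + expUtility P y / 2 + expSqDist P x y / 2 := by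
  have hmid : (fun ω => 1 - exp (-((1 / 2 : ℝ) • x + (1 / 2 : ℝ) • y) ω)) =ᵐ[P] fun ω =>
      (1 - exp (-x ω)) / 2 + (1 - exp (-y ω)) / 2 +
        (exp (-(x ω / 2)) - exp (-(y ω / 2))) ^ 2 / 2 := by
    filter_upwards [coeFn_smul_add_smul (1 / 2) (1 / 2) x y] with ω hω
    rw [hω, ← one_sub_exp_neg_midpoint]
    ring_nf
  have hIx := (integrable_one_sub_exp_neg hx).div_const 2
  have hIy := (integrable_one_sub_exp_neg hy).div_const 2
  have hIxy : Integrable (fun ω => (1 - exp (-x ω)) / 2 + (1 - exp (-y ω)) / 2) P := hIx.add hIy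
  rw [expUtility, integral_congr_ae hmid,
    integral_add hIxy ((integrable_exp_neg_half_sub_sq hx hy).div_const 2), integral_add hIx hIy,
    integral_div, integral_div, integral_div]
  rfl

lemma dist0_le_of_expSqDist {M β η : ℝ} (hx : ∀ᵐ ω ∂P, 0 ≤ x ω) (hy : ∀ᵐ ω ∂P, 0 ≤ y ω)
    (hβ : 0 ≤ β) (hη : 0 < η) (hηle : η ≤ exp (-(M / 2)) * (1 - exp (-(β / 2)))) :
    dist0 P x y ≤
      β + P.real {ω | M < x ω} + P.real {ω | M < y ω} + expSqDist P x y / η ^ 2 := by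
  have hA : MeasurableSet {ω | M < x ω} := by measurability
  have hB : MeasurableSet {ω | M < y ω} := by measurability
  have hIA : Integrable ({ω | M < x ω}.indicator (1 : Ω → ℝ)) P := (integrable_const 1).indicator hA
  have hIB : Integrable ({ω | M < y ω}.indicator (1 : Ω → ℝ)) P := (integrable_const 1).indicator hB
  have hβA : Integrable (fun ω => β + {ω | M < x ω}.indicator 1 ω) P :=
    (integrable_const β).add hIA
  have hβAB : Integrable (fun ω => β + {ω | M < x ω}.indicator 1 ω +
      {ω | M < y ω}.indicator 1 ω) P := hβA.add hIB
  have hsq := (integrable_exp_neg_half_sub_sq hx hy).div_const (η ^ 2)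
  calc dist0 P x y ≤ ∫ ω, β + {ω | M < x ω}.indicator 1 ω + {ω | M < y ω}.indicator 1 ω +
        (exp (-(x ω / 2)) - exp (-(y ω / 2))) ^ 2 / η ^ 2 ∂P :=
        integral_mono (integrable_min_one_abs_sub x y) (hβAB.add hsq) fun ω => by
          simpa only [Set.indicator_apply, Set.mem_ofPred_eq, Pi.one_apply] using
            min_one_abs_sub_le hβ hη hηle
    _ = _ := by
      rw [integral_add hβAB hsq, integral_add hβA hIB, integral_add (integrable_const β) hIA,
        integral_indicator_one hA, integral_indicator_one hB, integral_div]
      simp [expSqDist]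

end ExpUtility

section Komlos

lemma Bounded0.exists_measureReal_le {C : Set (Ω →ₘ[P] ℝ)} (hC : Bounded0 P C) {γ : ℝ}
    (hγ : 0 < γ) : ∃ M : ℝ, ∀ x ∈ C, P.real {ω | M < x ω} ≤ γ := by
  obtain ⟨M, hM⟩ := (hC.eventually_lt_const (ENNReal.ofReal_pos.2 hγ)).exists
  exact ⟨M, fun x hx => ENNReal.toReal_le_of_le_ofReal hγ.le
    ((le_iSup₂ (f := fun x (_ : x ∈ C) => P {ω | M < x ω}) x hx).trans hM.le)⟩

variable [IsProbabilityMeasure P]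

/-- Take `y n` nearly maximizing `expUtility` on `K n`. For `n ≤ m` the midpoint of `y n` and
`y m` lies in `K n`, so `expUtility_midpoint` bounds `expSqDist P (y n) (y m)` by the distance of
the decreasing suprema from their limit. -/
lemma exists_seq_expSqDist_le {K : ℕ → Set (Ω →ₘ[P] ℝ)} (hanti : Antitone K)
    (hne : ∀ n, (K n).Nonempty) (hconv : ∀ n, Convex ℝ (K n)) (hK : ∀ n, K n ⊆ L0plus P) :
    ∃ (y : ℕ → Ω →ₘ[P] ℝ) (δ : ℕ → ℝ), (∀ n, y n ∈ K n) ∧ Tendsto δ atTop (𝓝 0) ∧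
      ∀ n m, n ≤ m → expSqDist P (y n) (y m) ≤ δ n := by
  have hnn : ∀ n, ∀ x ∈ K n, ∀ᵐ ω ∂P, 0 ≤ x ω := fun n x hx => ae_nonneg_of_mem_L0plus (hK n hx)
  set s : ℕ → ℝ := fun n => sSup (expUtility P '' K n)
  have hbdd : ∀ n, BddAbove (expUtility P '' K n) := fun n =>
    ⟨1, by rintro _ ⟨x, hx, rfl⟩; exact expUtility_le_one (hnn n x hx)⟩
  have hle_s : ∀ n, ∀ x ∈ K n, expUtility P x ≤ s n := fun n x hx =>
    le_csSup (hbdd n) ⟨x, hx, rfl⟩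
  have hs_anti : Antitone s := fun n m hnm =>
    csSup_le_csSup (hbdd n) ((hne m).image _) (image_mono (hanti hnm))
  have hs_lim : Tendsto s atTop (𝓝 (⨅ n, s n)) := by
    refine tendsto_atTop_ciInf hs_anti ⟨0, ?_⟩
    rintro _ ⟨n, rfl⟩
    obtain ⟨x, hx⟩ := hne n
    exact (expUtility_nonneg (hnn n x hx)).trans (hle_s n x hx)
  have hnear : ∀ n : ℕ, ∃ x ∈ K n, s n - 1 / (n + 1) < expUtility P x := fun n => by
    obtain ⟨_, ⟨x, hx, rfl⟩, hlt⟩ := exists_lt_of_lt_csSup ((hne n).image (expUtility P))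
      (sub_lt_self (s n) Nat.one_div_pos_of_nat)
    exact ⟨x, hx, hlt⟩
  choose y hyK hy using hnear
  refine ⟨y, fun n => (s n - ⨅ k, s k) + 2 * (1 / (n + 1)), hyK, ?_, fun n m hnm => ?_⟩
  · simpa using (hs_lim.sub_const (⨅ k, s k)).add
      (tendsto_one_div_add_atTop_nhds_zero_nat.const_mul 2)
  dsimp only
  have hmid := hle_s n _ (hconv n (hyK n) (hanti hnm (hyK m)) (by norm_num : (0 : ℝ) ≤ 1 / 2)
    (by norm_num : (0 : ℝ) ≤ 1 / 2) (by norm_num))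
  rw [expUtility_midpoint (hnn n _ (hyK n)) (hnn m _ (hyK m))] at hmid
  have hm : 1 / ((m : ℝ) + 1) ≤ 1 / (n + 1) := by gcongr
  linarith [hy n, hy m, hs_anti.le_of_tendsto hs_lim m]

lemma cauchy_of_expSqDist_le {C : Set (Ω →ₘ[P] ℝ)} (hC : C ⊆ L0plus P) (hbdd : Bounded0 P C)
    {y : ℕ → Ω →ₘ[P] ℝ} (hyC : ∀ n, y n ∈ C) {δ : ℕ → ℝ} (hδ : Tendsto δ atTop (𝓝 0))
    (hyδ : ∀ n m, n ≤ m → expSqDist P (y n) (y m) ≤ δ n) :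
    ∀ γ > 0, ∃ N, ∀ n m, N ≤ n → n ≤ m → dist0 P (y n) (y m) ≤ γ := by
  intro γ hγ
  obtain ⟨M, hM⟩ := hbdd.exists_measureReal_le (show 0 < γ / 4 by positivity)
  set η := exp (-(M / 2)) * (1 - exp (-(γ / 4 / 2)))
  have hη : 0 < η := mul_pos (exp_pos _) (sub_pos.2 (exp_lt_one_iff.2 (by linarith)))
  obtain ⟨N, hN⟩ := eventually_atTop.1
    (hδ.eventually_le_const (show 0 < η ^ 2 * (γ / 4) by positivity))
  refine ⟨N, fun n m hn hnm => ?_⟩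
  have hsq : expSqDist P (y n) (y m) / η ^ 2 ≤ γ / 4 := by
    rw [div_le_iff₀ (by positivity)]
    linarith [hyδ n m hnm, hN n hn]
  linarith [dist0_le_of_expSqDist (ae_nonneg_of_mem_L0plus (hC (hyC n)))
    (ae_nonneg_of_mem_L0plus (hC (hyC m))) (by positivity) hη le_rfl, hM _ (hyC n), hM _ (hyC m)]

/-- A Komlós-type selection lemma. -/
theorem exists_cauchy_of_antitone_convex {C : Set (Ω →ₘ[P] ℝ)} (hC : C ⊆ L0plus P)
    (hbdd : Bounded0 P C) {K : ℕ → Set (Ω →ₘ[P] ℝ)} (hanti : Antitone K)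
    (hne : ∀ n, (K n).Nonempty) (hconv : ∀ n, Convex ℝ (K n)) (hKC : ∀ n, K n ⊆ C) :
    ∃ y : ℕ → Ω →ₘ[P] ℝ, (∀ n, y n ∈ K n) ∧
      ∀ γ > 0, ∃ N, ∀ n m, N ≤ n → n ≤ m → dist0 P (y n) (y m) ≤ γ := by
  obtain ⟨y, δ, hyK, hδ, hyδ⟩ :=
    exists_seq_expSqDist_le hanti hne hconv fun n => (hKC n).trans hC
  exact ⟨y, hyK, cauchy_of_expSqDist_le hC hbdd (fun n => hKC n (hyK n)) hδ hyδ⟩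

end Komlos

theorem exists_dist0_lt_of_ae_tendsto [IsProbabilityMeasure P] {C : Set (Ω →ₘ[P] ℝ)}
    (hCL0 : C ⊆ L0plus P) (hconv : Convex ℝ C) (hcl : IsClosed0 P C) (hbdd : Bounded0 P C)
    {g : Ω →ₘ[P] ℝ} (hg : g ∈ maxSet P C) {F H : ℕ → Ω →ₘ[P] ℝ} (hH : ∀ k, H k ∈ C)
    (hFH : ∀ k, F k ≤ H k) (hF : ∀ᵐ ω ∂P, Tendsto (fun k => F k ω) atTop (𝓝 (g ω)))
    {ε : ℝ} (hε : 0 < ε) : ∃ k, dist0 P (H k) (F k) < ε := by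
  by_contra! hsep
  set K : ℕ → Set ((Ω →ₘ[P] ℝ) × (Ω →ₘ[P] ℝ)) :=
    fun n => convexHull ℝ ((fun k => (F k, H k)) '' Ici n)
  have hK_sep : ∀ n, K n ⊆ {q | (∀ᵐ ω ∂P, q.1 ω ≤ q.2 ω) ∧ ε ≤ dist0 P q.2 q.1} := fun n =>
    convexHull_min (by rintro _ ⟨k, -, rfl⟩; exact ⟨AEEqFun.coeFn_le.2 (hFH k), hsep k⟩)
      (convex_setOf_ae_le_and_le_dist0 ε)
  have hK_fst : ∀ n, LinearMap.fst ℝ _ _ '' K n = convexHull ℝ (F '' Ici n) := fun n => by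
    rw [LinearMap.image_convexHull, image_image]
    rfl
  have hK_snd : ∀ n, LinearMap.snd ℝ _ _ '' K n ⊆ C := fun n => by
    rw [LinearMap.image_convexHull, image_image]
    exact convexHull_min (by rintro _ ⟨k, -, rfl⟩; exact hH k) hconv
  obtain ⟨y, hyK, hy⟩ := exists_cauchy_of_antitone_convex hCL0 hbdd
    (fun n m hnm => image_mono (convexHull_mono (image_mono (Ici_subset_Ici.2 hnm))))
    (fun n => ⟨H n, (F n, H n), subset_convexHull ℝ _ ⟨n, self_mem_Ici, rfl⟩, rfl⟩)
    (fun n => (convex_convexHull ℝ _).linear_image _) hK_snd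
  choose p hpK hpy using hyK
  simp only [LinearMap.snd_apply] at hpy
  obtain ⟨a, ha⟩ := exists_tendsto0_of_cauchy hy
  have haC : a ∈ C := mem_of_tendsto0 hcl (fun n => hK_snd n ⟨p n, hpK n, hpy n⟩) ha
  have hfst : Tendsto0 P (fun n => (p n).1) g := tendsto0_of_ae_tendsto <|
    ae_tendsto_of_forwardConvexComb hF fun n => hK_fst n ▸ ⟨p n, hpK n, rfl⟩
  have hga : g ≤ a := le_of_tendsto0 hfst ha fun n =>
    hpy n ▸ AEEqFun.coeFn_le.1 (hK_sep n (hpK n)).1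
  obtain rfl := hg.2 a haC hga
  have hgap : Tendsto (fun n => dist0 P (y n) g + dist0 P (p n).1 g) atTop (𝓝 0) := by
    simpa using ha.add hfst
  obtain ⟨n, hn⟩ := (hgap.eventually_lt_const hε).exists
  have hεn := (hK_sep n (hpK n)).2
  rw [← hpy n] at hn
  linarith [dist0_triangle (p n).2 g (p n).1, dist0_comm g (p n).1]

end L0

theorem statement9_general {Ω : Type*} [MeasurableSpace Ω] (P : Measure Ω) [IsProbabilityMeasure P]
    (C : Set (Ω →ₘ[P] ℝ)) (hCL0 : C ⊆ L0plus P)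
    (hconv : Convex ℝ C) (hcl : IsClosed0 P C) (hbdd : Bounded0 P C)
    (f : ℕ → Ω →ₘ[P] ℝ)
    (g : Ω →ₘ[P] ℝ) (hg : g ∈ maxSet P C) (hconvg : Tendsto0 P f g)
    (h : ℕ → Ω →ₘ[P] ℝ) (hhC : ∀ n, h n ∈ C) (hle : ∀ n, f n ≤ h n) :
    Tendsto0 P h g := by
  suffices hgap : Tendsto (fun n => dist0 P (h n) (f n)) atTop (𝓝 0) from
    squeeze_zero (fun n => dist0_nonneg _ _) (fun n => dist0_triangle (h n) (f n) g)
      (by simpa using hgap.add hconvg)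
  refine tendsto_order.2 ⟨fun b hb => Eventually.of_forall fun n =>
    hb.trans_le (dist0_nonneg _ _), fun ε hε => ?_⟩
  by_contra hfreq
  obtain ⟨φ, hφ, hsep⟩ := extraction_of_frequently_atTop (not_eventually.1 hfreq)
  obtain ⟨ψ, -, hae⟩ := exists_subseq_ae_tendsto (hconvg.comp hφ.tendsto_atTop)
  obtain ⟨j, hj⟩ := exists_dist0_lt_of_ae_tendsto hCL0 hconv hcl hbdd hg
    (fun j => hhC (φ (ψ j))) (fun j => hle (φ (ψ j))) hae hε
  exact hsep _ hj

/-- Let `C ⊆ L⁰₊` be convexly compact and `(f n)` a `C`-valued sequence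
converging in probability to `g ∈ C^max`. Then every `C`-valued sequence `(h n)` with
`f n ≤ h n` a.s. for all `n` also converges in probability to `g`. -/
theorem statement9 {Ω : Type*} [MeasurableSpace Ω] (P : Measure Ω) [IsProbabilityMeasure P]
    (C : Set (Ω →ₘ[P] ℝ)) (hCL0 : C ⊆ L0plus P)
    (hconv : Convex ℝ C) (hcl : IsClosed0 P C) (hbdd : Bounded0 P C)
    (f : ℕ → Ω →ₘ[P] ℝ) (hf : ∀ n, f n ∈ C)
    (g : Ω →ₘ[P] ℝ) (hg : g ∈ maxSet P C) (hconvg : Tendsto0 P f g)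
    (h : ℕ → Ω →ₘ[P] ℝ) (hhC : ∀ n, h n ∈ C) (hle : ∀ n, f n ≤ h n) :
    Tendsto0 P h g :=
  statement9_general P C hCL0 hconv hcl hbdd f g hg hconvg h hhC hle
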